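/- Let λ ∈ (0,1) and θ ∈ (1, ∞). Then the function f : ℝ → ℝ defined by f(c) = (c/((2θ−1+2cθ)(2−2θ−c(2θ−1))))^((1−θ)/(θ−1/2)) − (2θ−1+2cθ)²/(1−λ) has exactly one zero in the open interval ((1−θ)/θ, 0); i.e., there exists a unique c ∈ ((1−θ)/θ, 0) with f(c) = 0. -/

import Mathlib

open Real Set Filter Topology

/-!
With `p = (1 - θ)/(θ - 1/2) < 0`, `a = 2θ - 1 + 2cθ` and `b = 2 - 2θ - c(2θ - 1)`, taking
logarithms turns `f c = 0` into `G c = -log (1 - λ) > 0`, where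
`G c = p log c - (p + 2) log a - p log b` is `logBalance`. On `[(1 - θ)/θ, 0)` we have
`a > 0 > b`; `G` vanishes at the left endpoint (where `a = 1` and `b = c`), has derivative
`4(θ - 1 + θc)² / (c a b) > 0` inside, and tends to `+∞` as `c → 0⁻` because `p < 0`. So `G`
takes every positive value exactly once.
-/

theorem existsUnique_eq_of_strictMonoOn_of_tendsto_atTop {g : ℝ → ℝ} {a b t : ℝ} (hab : a < b)
    (hmono : StrictMonoOn g (Ico a b)) (hcont : ContinuousOn g (Ico a b)) (ht : g a < t)
    (hlim : Tendsto g (𝓝[<] b) atTop) :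
    ∃! x, x ∈ Ioo a b ∧ g x = t := by
  obtain ⟨d, hgd, hd⟩ := ((hlim.eventually_gt_atTop t).and (Ioo_mem_nhdsLT hab)).exists
  obtain ⟨x, hx, hgx⟩ := intermediate_value_Ioo hd.1.le
    (hcont.mono (Icc_subset_Ico_right hd.2)) ⟨ht, hgd⟩
  refine ⟨x, ⟨⟨hx.1, hx.2.trans hd.2⟩, hgx⟩, fun y ⟨hy, hgy⟩ => ?_⟩
  exact hmono.injOn (Ioo_subset_Ico_self hy) ⟨hx.1.le, hx.2.trans hd.2⟩ (hgy.trans hgx.symm)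

-- `log` is `log |·|`, so where `c` and the last factor are negative this is the logarithm of
-- `(c / (a * b)) ^ p / a ^ 2`.
noncomputable def logBalance (θ c : ℝ) : ℝ :=
  (1 - θ)/(θ - 1/2) * log c - ((1 - θ)/(θ - 1/2) + 2) * log (2*θ - 1 + 2*c*θ)
    - (1 - θ)/(θ - 1/2) * log (2 - 2*θ - c*(2*θ - 1))

section

variable {θ c : ℝ}

theorem linear_factors_sign (hθ : 0 < θ) (hc : c ∈ Ico ((1 - θ)/θ) 0) :
    0 < 2*θ - 1 + 2*c*θ ∧ 2 - 2*θ - c*(2*θ - 1) < 0 := by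
  have : 1 - θ ≤ c * θ := (div_le_iff₀ hθ).1 hc.1
  constructor <;> linarith [hc.2]

theorem hasDerivAt_logBalance (hθ : θ ≠ 1/2) (hc : c ≠ 0)
    (ha : 2*θ - 1 + 2*c*θ ≠ 0) (hb : 2 - 2*θ - c*(2*θ - 1) ≠ 0) :
    HasDerivAt (logBalance θ)
      (4*(θ - 1 + θ*c)^2 / (c * ((2*θ - 1 + 2*c*θ) * (2 - 2*θ - c*(2*θ - 1))))) c := by
  have hdA := (((hasDerivAt_id' c).const_mul 2).mul_const θ).const_add (2*θ - 1)
  have hdB := ((hasDerivAt_id' c).mul_const (2*θ - 1)).const_sub (2 - 2*θ)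
  refine HasDerivAt.congr_deriv (f := logBalance θ) ((((hasDerivAt_log hc).const_mul
    ((1 - θ)/(θ - 1/2))).sub ((hdA.log ha).const_mul ((1 - θ)/(θ - 1/2) + 2))).sub
    ((hdB.log hb).const_mul ((1 - θ)/(θ - 1/2)))) ?_
  have hq : (1 - θ)/(θ - 1/2) * (2*θ - 1) = 2*(1 - θ) := by
    rw [div_mul_eq_mul_div, div_eq_iff (sub_ne_zero.2 hθ)]; ring
  generalize (1 - θ)/(θ - 1/2) = q at hq ⊢
  generalize eA : 2*θ - 1 + 2*c*θ = A at ha ⊢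
  generalize eB : 2 - 2*θ - c*(2*θ - 1) = B at hb ⊢
  field_simp
  subst eA eB
  -- the `q`-terms collect to `q (2θ - 1) (2 - 2θ + 2θc²)`
  linear_combination (2 - 2*θ + 2*θ*c^2) * hq

theorem continuousOn_logBalance (hθ : 1 < θ) : ContinuousOn (logBalance θ) (Ico ((1 - θ)/θ) 0) :=
  fun c hc => by
    obtain ⟨ha, hb⟩ := linear_factors_sign (by linarith) hc
    exact (hasDerivAt_logBalance (by linarith) hc.2.ne ha.ne' hb.ne).continuousAt.continuousWithinAt

theorem strictMonoOn_logBalance (hθ : 1 < θ) : StrictMonoOn (logBalance θ) (Ico ((1 - θ)/θ) 0) := by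
  refine strictMonoOn_of_deriv_pos (convex_Ico _ _) (continuousOn_logBalance hθ) fun c hc => ?_
  rw [interior_Ico] at hc
  obtain ⟨ha, hb⟩ := linear_factors_sign (by linarith) (Ioo_subset_Ico_self hc)
  rw [(hasDerivAt_logBalance (by linarith) hc.2.ne ha.ne' hb.ne).deriv]
  have : 1 - θ < c * θ := (div_lt_iff₀ (by linarith)).1 hc.1
  exact div_pos (by nlinarith) (mul_pos_of_neg_of_neg hc.2 (mul_neg_of_pos_of_neg ha hb))

theorem logBalance_left_endpoint (hθ : θ ≠ 0) : logBalance θ ((1 - θ)/θ) = 0 := by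
  have ha : 2*θ - 1 + 2*((1 - θ)/θ)*θ = 1 := by field_simp; ring
  have hb : 2 - 2*θ - (1 - θ)/θ*(2*θ - 1) = (1 - θ)/θ := by field_simp; ring
  rw [logBalance, ha, hb, log_one]
  ring

theorem tendsto_logBalance_nhdsLT_zero (hθ : 1 < θ) :
    Tendsto (logBalance θ) (𝓝[<] 0) atTop := by
  have hlog : Tendsto (fun c => (1 - θ)/(θ - 1/2) * log c) (𝓝[<] 0) atTop :=
    tendsto_log_nhdsLT_zero.const_mul_atBot_of_neg
      (div_neg_of_neg_of_pos (by linarith) (by linarith))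
  have hrest : ContinuousAt (fun c => -((1 - θ)/(θ - 1/2) + 2) * log (2*θ - 1 + 2*c*θ)
      - (1 - θ)/(θ - 1/2) * log (2 - 2*θ - c*(2*θ - 1))) 0 :=
    ((continuousAt_const.mul ((by fun_prop : ContinuousAt (fun c : ℝ => 2*θ - 1 + 2*c*θ) 0).log
      (by linarith))).sub (continuousAt_const.mul
      ((by fun_prop : ContinuousAt (fun c : ℝ => 2 - 2*θ - c*(2*θ - 1)) 0).log (by linarith))))
  refine (hlog.atTop_add (hrest.tendsto.mono_left nhdsWithin_le_nhds)).congr fun c => ?_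
  simp only [logBalance]
  ring

theorem sub_eq_zero_iff_logBalance_eq {lam : ℝ} (hlam : lam < 1) (hc : c < 0)
    (ha : 0 < 2*θ - 1 + 2*c*θ) (hb : 2 - 2*θ - c*(2*θ - 1) < 0) :
    (c / ((2*θ - 1 + 2*c*θ) * (2 - 2*θ - c*(2*θ - 1)))) ^ ((1 - θ)/(θ - 1/2))
        - (2*θ - 1 + 2*c*θ)^2 / (1 - lam) = 0 ↔ logBalance θ c = -log (1 - lam) := by
  have hX : 0 < c / ((2*θ - 1 + 2*c*θ) * (2 - 2*θ - c*(2*θ - 1))) :=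
    div_pos_of_neg_of_neg hc (mul_neg_of_pos_of_neg ha hb)
  have hQ : 0 < (2*θ - 1 + 2*c*θ)^2 / (1 - lam) := div_pos (by positivity) (by linarith)
  rw [sub_eq_zero, ← (log_injOn_pos.eq_iff (rpow_pos_of_pos hX _) hQ), log_rpow hX,
    log_div hc.ne (mul_ne_zero ha.ne' hb.ne), log_mul ha.ne' hb.ne,
    log_div (by positivity) (by linarith), log_pow, logBalance]
  constructor <;> intro h <;> push_cast at h ⊢ <;> linarith

end

theorem growth_optimal_f_unique_root_theta_gt_one
    (lam θ : ℝ) (hlam : lam ∈ Set.Ioo (0:ℝ) 1) (hθ : θ ∈ Set.Ioi (1:ℝ))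
    (f : ℝ → ℝ)
    (hf : ∀ c : ℝ, f c =
      (c / ((2*θ - 1 + 2*c*θ) * (2 - 2*θ - c*(2*θ - 1)))) ^ ((1 - θ)/(θ - 1/2))
        - (2*θ - 1 + 2*c*θ)^2 / (1 - lam)) :
    ∃! c : ℝ, c ∈ Set.Ioo ((1 - θ)/θ) 0 ∧ f c = 0 := by
  obtain ⟨hlam0, hlam1⟩ := hlam
  have hθ1 : 1 < θ := hθ
  have hroot : ∀ c, c ∈ Ioo ((1 - θ)/θ) 0 ∧ f c = 0 ↔
      c ∈ Ioo ((1 - θ)/θ) 0 ∧ logBalance θ c = -log (1 - lam) := fun c =>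
    and_congr_right fun hc => by
      obtain ⟨ha, hb⟩ := linear_factors_sign (by linarith) (Ioo_subset_Ico_self hc)
      rw [hf, sub_eq_zero_iff_logBalance_eq hlam1 hc.2 ha hb]
  rw [existsUnique_congr hroot]
  refine existsUnique_eq_of_strictMonoOn_of_tendsto_atTop
    (div_neg_of_neg_of_pos (by linarith) (by linarith)) (strictMonoOn_logBalance hθ1)
    (continuousOn_logBalance hθ1) ?_ (tendsto_logBalance_nhdsLT_zero hθ1)
  rw [logBalance_left_endpoint (by linarith)]
  exact neg_pos.2 (log_neg (by linarith) (by linarith))
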